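/- arXiv:2012.00268 — 2 statements merged into one kernel-verified Lean document; each statement's English description precedes it below -/
import Mathlib

section
/- Let m_B, m_E be positive integers, K_{B,1}, K_{B,2}, K_{E,1}, K_{E,2} > 0, ρ_{B,1}, ρ_{B,2}, ρ_{E,1}, ρ_{E,2} > 0 real, p_B, p_E ∈ [0,1], and R_s ≥ 1 real. Let F_B^{ARS} be the ARS CDF with parameters (p_B, m_B, K_{B,1}, K_{B,2}, ρ_{B,1}, ρ_{B,2}) and f_E^{ARS} the ARS PDF with parameters (p_E, m_E, K_{E,1}, K_{E,2}, ρ_{E,1}, ρ_{E,2}). Then the secrecy outage probability P_o = ∫₀^∞ F_B^{ARS}(R_s·γ + R_s − 1)·f_E^{ARS}(γ) dγ satisfies P_o = Σ_{i=1}^{2} Σ_{j=1}^{2} Q_{B,i}·Q_{E,j}·W_{i,j}, where Q_{ℓ,1} = p_ℓ, Q_{ℓ,2} = 1 − p_ℓ, and W_{i,j} = Σ_{l=0}^{m_B−1} Σ_{n=0}^{m_E−1} B_l(m_B,K_{B,i})·B_n(m_E,K_{E,j})·( 1 − exp(−(R_s−1)/ρ_{B,i}) · Σ_{k=0}^{m_B−l−1}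 Σ_{t=0}^{k} [ (R_s−1)^t · R_s^{k−t} · (m_E−n+k−t−1)! ] / [ ρ_{B,i}^k · ρ_{E,j}^{m_E−n} · t! · (k−t)! · (m_E−n−1)! ] · (1/ρ_{E,j} + R_s/ρ_{B,i})^{−(m_E−n+k−t)} ). -/
/-!
With integer `m`, a Rician shadowed law is a finite mixture, with weights `Bcoef`, of Erlang laws
of shapes `1, …, m`, and an ARS law is a two-component mixture of those; so the outage integral
expands bilinearly into integrals of an Erlang CDF at `Rs γ + (Rs - 1)` against an Erlang
density. The Erlang CDF is `1 - e^{-x/ρ} ∑_{k<M} x^k / (ρ^k k!)`; expanding `(Rs γ + (Rs - 1))^k`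
binomially leaves Gamma integrals `∫₀^∞ γ^j e^{-bγ} dγ = j! / b^{j+1}` with `b = 1/ρ_E + Rs/ρ_B`.
-/

open MeasureTheory Filter Finset Real

/-- Coefficients `B_n(m,K)` of the integer-parameter Rician shadowed model. -/
noncomputable def Bcoef (m : ℕ) (K : ℝ) (n : ℕ) : ℝ :=
  ((m - 1).choose n : ℝ) * ((m : ℝ) / (K + m)) ^ n * (K / (K + m)) ^ (m - 1 - n)

/-- Integer-parameter Rician shadowed PDF with parameters `(m, K, ρ)`. -/
noncomputable def rsPDF (m : ℕ) (K ρ : ℝ) (γ : ℝ) : ℝ :=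
  ∑ n ∈ Finset.range m,
    Bcoef m K n * γ ^ (m - n - 1) * Real.exp (-γ / ρ) /
      (ρ ^ (m - n) * ((m - n - 1).factorial : ℝ))

/-- Integer-parameter Rician shadowed CDF with parameters `(m, K, ρ)`. -/
noncomputable def rsCDF (m : ℕ) (K ρ : ℝ) (γ : ℝ) : ℝ :=
  ∑ j ∈ Finset.range m,
    Bcoef m K j *
      (1 - Real.exp (-γ / ρ) *
        ∑ k ∈ Finset.range (m - j), γ ^ k / (ρ ^ k * (k.factorial : ℝ)))

/-- Alternate Rician Shadowed (ARS) PDF with parameters `(p, m, K₁, K₂, ρ₁, ρ₂)`. -/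
noncomputable def arsPDF (p : ℝ) (m : ℕ) (K₁ K₂ ρ₁ ρ₂ : ℝ) (γ : ℝ) : ℝ :=
  p * rsPDF m K₁ ρ₁ γ + (1 - p) * rsPDF m K₂ ρ₂ γ

/-- Alternate Rician Shadowed (ARS) CDF with parameters `(p, m, K₁, K₂, ρ₁, ρ₂)`. -/
noncomputable def arsCDF (p : ℝ) (m : ℕ) (K₁ K₂ ρ₁ ρ₂ : ℝ) (γ : ℝ) : ℝ :=
  p * rsCDF m K₁ ρ₁ γ + (1 - p) * rsCDF m K₂ ρ₂ γ

open scoped Nat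

lemma integral_pow_mul_exp_neg_mul (k : ℕ) {b : ℝ} (hb : 0 < b) :
    ∫ x in Set.Ioi (0 : ℝ), x ^ k * exp (-(b * x)) = k ! / b ^ (k + 1) := by
  have key := integral_rpow_mul_exp_neg_mul_Ioi (a := k + 1) (by positivity) hb
  simp_rw [add_sub_cancel_right, rpow_natCast, Gamma_nat_eq_factorial] at key
  rw [key, ← Nat.cast_succ, rpow_natCast, one_div, inv_pow, inv_mul_eq_div]

lemma integrableOn_pow_mul_exp_neg_mul (k : ℕ) {b : ℝ} (hb : 0 < b) :
    IntegrableOn (fun x : ℝ ↦ x ^ k * exp (-(b * x))) (Set.Ioi 0) :=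
  .of_integral_ne_zero (by rw [integral_pow_mul_exp_neg_mul k hb]; positivity)

noncomputable def erlangPDF (N : ℕ) (ρ γ : ℝ) : ℝ :=
  γ ^ (N - 1) * exp (-γ / ρ) / (ρ ^ N * (N - 1)!)

noncomputable def erlangCDF (N : ℕ) (ρ x : ℝ) : ℝ :=
  1 - exp (-x / ρ) * ∑ k ∈ range N, x ^ k / (ρ ^ k * k !)

lemma erlangPDF_eq_inv_mul (N : ℕ) (ρ γ : ℝ) :
    erlangPDF N ρ γ = (ρ ^ N * (N - 1)!)⁻¹ * (γ ^ (N - 1) * exp (-(ρ⁻¹ * γ))) := by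
  rw [erlangPDF, div_eq_inv_mul, neg_div, div_eq_inv_mul]

lemma integral_erlangPDF {N : ℕ} (hN : 0 < N) {ρ : ℝ} (hρ : 0 < ρ) :
    ∫ γ in Set.Ioi (0 : ℝ), erlangPDF N ρ γ = 1 := by
  simp_rw [erlangPDF_eq_inv_mul]
  rw [integral_const_mul, integral_pow_mul_exp_neg_mul _ (inv_pos.2 hρ), Nat.sub_add_cancel hN,
    inv_pow]
  field_simp

lemma integrableOn_erlangPDF (N : ℕ) {ρ : ℝ} (hρ : 0 < ρ) :
    IntegrableOn (erlangPDF N ρ) (Set.Ioi 0) := by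
  rw [show erlangPDF N ρ = _ from funext (erlangPDF_eq_inv_mul N ρ)]
  exact (integrableOn_pow_mul_exp_neg_mul _ (inv_pos.2 hρ)).const_mul _

lemma erlangCDF_affine_mul_erlangPDF (M N : ℕ) (ρB ρE c d γ : ℝ) :
    erlangCDF M ρB (c * γ + d) * erlangPDF N ρE γ =
      erlangPDF N ρE γ - exp (-d / ρB) *
        ∑ k ∈ range M, ∑ t ∈ range (k + 1),
          k.choose t * d ^ t * c ^ (k - t) / (ρB ^ k * k ! * (ρE ^ N * (N - 1)!)) *
            (γ ^ (N - 1 + (k - t)) * exp (-((1 / ρE + c / ρB) * γ))) := by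
  have hexp : exp (-γ / ρE) * exp (-(d + c * γ) / ρB) =
      exp (-d / ρB) * exp (-((1 / ρE + c / ρB) * γ)) := by
    rw [← exp_add, ← exp_add]; ring_nf
  rw [erlangCDF, erlangPDF, sub_mul, one_mul, sub_right_inj, add_comm (c * γ), mul_comm,
    ← mul_assoc, mul_sum, mul_sum]
  refine sum_congr rfl fun k _ ↦ ?_
  rw [add_pow, sum_div, mul_sum, mul_sum]
  refine sum_congr rfl fun t _ ↦ ?_
  linear_combination γ ^ (N - 1) * d ^ t * (c * γ) ^ (k - t) * k.choose t /
    (ρE ^ N * (N - 1)! * ρB ^ k * k !) * hexp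

section ErlangAffine

variable (M : ℕ) {N : ℕ} {ρB ρE c : ℝ} (d : ℝ)

lemma integrableOn_erlangCDF_affine_mul_erlangPDF (hρB : 0 < ρB) (hρE : 0 < ρE) (hc : 0 ≤ c) :
    IntegrableOn (fun γ ↦ erlangCDF M ρB (c * γ + d) * erlangPDF N ρE γ) (Set.Ioi 0) := by
  have hb : 0 < 1 / ρE + c / ρB := by positivity
  simp_rw [erlangCDF_affine_mul_erlangPDF]
  exact (integrableOn_erlangPDF N hρE).sub <| .const_mul (integrable_finsetSum _ fun k _ ↦
    integrable_finsetSum _ fun t _ ↦ (integrableOn_pow_mul_exp_neg_mul _ hb).const_mul _) _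

lemma integral_erlangCDF_affine_mul_erlangPDF (hN : 0 < N) (hρB : 0 < ρB) (hρE : 0 < ρE)
    (hc : 0 ≤ c) :
    ∫ γ in Set.Ioi (0 : ℝ), erlangCDF M ρB (c * γ + d) * erlangPDF N ρE γ =
      1 - exp (-d / ρB) *
        ∑ k ∈ range M, ∑ t ∈ range (k + 1),
          d ^ t * c ^ (k - t) * (N + k - t - 1)! /
              (ρB ^ k * ρE ^ N * t ! * (k - t)! * (N - 1)!) *
            (1 / ρE + c / ρB) ^ (-((N + k - t : ℕ) : ℤ)) := by
  have hb : 0 < 1 / ρE + c / ρB := by positivity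
  have hterm (j : ℕ) := integrableOn_pow_mul_exp_neg_mul j hb
  simp_rw [erlangCDF_affine_mul_erlangPDF]
  rw [integral_sub (integrableOn_erlangPDF N hρE) (.const_mul (integrable_finsetSum _ fun k _ ↦
      integrable_finsetSum _ fun t _ ↦ (hterm _).const_mul _) _),
    integral_erlangPDF hN hρE, integral_const_mul,
    integral_finsetSum _ fun k _ ↦ integrable_finsetSum _ fun t _ ↦ (hterm _).const_mul _]
  congr 2
  refine sum_congr rfl fun k _ ↦ ?_
  rw [integral_finsetSum _ fun t _ ↦ (hterm _).const_mul _]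
  refine sum_congr rfl fun t ht ↦ ?_
  have htk : t ≤ k := Nat.lt_succ_iff.mp (mem_range.mp ht)
  rw [integral_const_mul, integral_pow_mul_exp_neg_mul _ hb, Nat.cast_choose ℝ htk,
    show N - 1 + (k - t) = N + k - t - 1 by omega, show N + k - t - 1 + 1 = N + k - t by omega,
    zpow_neg, zpow_natCast]
  field_simp

end ErlangAffine

lemma rsPDF_eq_sum_erlangPDF (m : ℕ) (K ρ γ : ℝ) :
    rsPDF m K ρ γ = ∑ n ∈ range m, Bcoef m K n * erlangPDF (m - n) ρ γ := by
  simp only [rsPDF, erlangPDF, mul_div_assoc, mul_assoc]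

lemma rsCDF_eq_sum_erlangCDF (m : ℕ) (K ρ x : ℝ) :
    rsCDF m K ρ x = ∑ j ∈ range m, Bcoef m K j * erlangCDF (m - j) ρ x :=
  rfl

section RicianShadowedAffine

variable (M N : ℕ) (KB KE : ℝ) {ρB ρE c : ℝ} (d : ℝ)

lemma rsCDF_mul_rsPDF (x γ : ℝ) :
    rsCDF M KB ρB x * rsPDF N KE ρE γ =
      ∑ l ∈ range M, ∑ n ∈ range N,
        Bcoef M KB l * Bcoef N KE n * (erlangCDF (M - l) ρB x * erlangPDF (N - n) ρE γ) := by
  simp only [rsCDF_eq_sum_erlangCDF, rsPDF_eq_sum_erlangPDF, sum_mul_sum, mul_mul_mul_comm]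

lemma integrableOn_rsCDF_affine_mul_rsPDF (hρB : 0 < ρB) (hρE : 0 < ρE) (hc : 0 ≤ c) :
    IntegrableOn (fun γ ↦ rsCDF M KB ρB (c * γ + d) * rsPDF N KE ρE γ) (Set.Ioi 0) := by
  simp_rw [rsCDF_mul_rsPDF]
  exact integrable_finsetSum _ fun l _ ↦ integrable_finsetSum _ fun n _ ↦
    (integrableOn_erlangCDF_affine_mul_erlangPDF _ d hρB hρE hc).const_mul _

lemma integral_rsCDF_affine_mul_rsPDF (hρB : 0 < ρB) (hρE : 0 < ρE) (hc : 0 ≤ c) :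
    ∫ γ in Set.Ioi (0 : ℝ), rsCDF M KB ρB (c * γ + d) * rsPDF N KE ρE γ =
      ∑ l ∈ range M, ∑ n ∈ range N,
        Bcoef M KB l * Bcoef N KE n *
          (1 - exp (-d / ρB) *
            ∑ k ∈ range (M - l), ∑ t ∈ range (k + 1),
              d ^ t * c ^ (k - t) * (N - n + k - t - 1)! /
                  (ρB ^ k * ρE ^ (N - n) * t ! * (k - t)! * (N - n - 1)!) *
                (1 / ρE + c / ρB) ^ (-((N - n + k - t : ℕ) : ℤ))) := by
  have hterm (l n : ℕ) := (integrableOn_erlangCDF_affine_mul_erlangPDF (M - l) d (N := N - n)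
    hρB hρE hc).const_mul (Bcoef M KB l * Bcoef N KE n)
  simp_rw [rsCDF_mul_rsPDF]
  rw [integral_finsetSum _ fun l _ ↦ integrable_finsetSum _ fun n _ ↦ hterm l n]
  refine sum_congr rfl fun l _ ↦ ?_
  rw [integral_finsetSum _ fun n _ ↦ hterm l n]
  refine sum_congr rfl fun n hn ↦ ?_
  rw [integral_const_mul, integral_erlangCDF_affine_mul_erlangPDF _ _
    (Nat.sub_pos_of_lt (mem_range.mp hn)) hρB hρE hc]

end RicianShadowedAffine

lemma arsCDF_mul_arsPDF (pB pE : ℝ) (mB mE : ℕ) (KB1 KB2 KE1 KE2 ρB1 ρB2 ρE1 ρE2 x γ : ℝ) :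
    arsCDF pB mB KB1 KB2 ρB1 ρB2 x * arsPDF pE mE KE1 KE2 ρE1 ρE2 γ =
      ∑ i : Fin 2, ∑ j : Fin 2, ![pB, 1 - pB] i * ![pE, 1 - pE] j *
        (rsCDF mB (![KB1, KB2] i) (![ρB1, ρB2] i) x *
          rsPDF mE (![KE1, KE2] j) (![ρE1, ρE2] j) γ) := by
  simp only [arsCDF, arsPDF, Fin.sum_univ_two, Matrix.cons_val_zero, Matrix.cons_val_one]
  ring

theorem sop_closed_form_general (mB mE : ℕ)
    (KB1 KB2 KE1 KE2 : ℝ)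
    (ρB1 ρB2 ρE1 ρE2 : ℝ) (hρB1 : 0 < ρB1) (hρB2 : 0 < ρB2)
    (hρE1 : 0 < ρE1) (hρE2 : 0 < ρE2)
    (pB pE : ℝ)
    (Rs : ℝ) (hRs : 1 ≤ Rs) :
    ∫ γ in Set.Ioi (0 : ℝ),
        arsCDF pB mB KB1 KB2 ρB1 ρB2 (Rs * γ + Rs - 1) *
          arsPDF pE mE KE1 KE2 ρE1 ρE2 γ =
      ∑ i : Fin 2, ∑ j : Fin 2,
        (![pB, 1 - pB] i) * (![pE, 1 - pE] j) *
          (∑ l ∈ Finset.range mB, ∑ n ∈ Finset.range mE,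
            Bcoef mB (![KB1, KB2] i) l * Bcoef mE (![KE1, KE2] j) n *
              (1 - Real.exp (-(Rs - 1) / ![ρB1, ρB2] i) *
                ∑ k ∈ Finset.range (mB - l), ∑ t ∈ Finset.range (k + 1),
                  (Rs - 1) ^ t * Rs ^ (k - t) *
                      ((mE - n + k - t - 1).factorial : ℝ) /
                      ((![ρB1, ρB2] i) ^ k * (![ρE1, ρE2] j) ^ (mE - n) *
                        (t.factorial : ℝ) * ((k - t).factorial : ℝ) *
                        ((mE - n - 1).factorial : ℝ)) *
                    (1 / ![ρE1, ρE2] j + Rs / ![ρB1, ρB2] i) ^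
                      (-((mE - n + k - t : ℕ) : ℤ)))) := by
  have hρB : ∀ i, 0 < ![ρB1, ρB2] i := Fin.forall_fin_two.2 ⟨hρB1, hρB2⟩
  have hρE : ∀ j, 0 < ![ρE1, ρE2] j := Fin.forall_fin_two.2 ⟨hρE1, hρE2⟩
  have hRs0 : 0 ≤ Rs := by linarith
  have hterm (i j : Fin 2) :=
    (integrableOn_rsCDF_affine_mul_rsPDF mB mE (![KB1, KB2] i) (![KE1, KE2] j) (Rs - 1)
      (hρB i) (hρE j) hRs0).const_mul (![pB, 1 - pB] i * ![pE, 1 - pE] j)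
  simp_rw [arsCDF_mul_arsPDF, add_sub_assoc]
  rw [integral_finsetSum _ fun i _ ↦ integrable_finsetSum _ fun j _ ↦ hterm i j]
  refine sum_congr rfl fun i _ ↦ ?_
  rw [integral_finsetSum _ fun j _ ↦ hterm i j]
  refine sum_congr rfl fun j _ ↦ ?_
  rw [integral_const_mul, integral_rsCDF_affine_mul_rsPDF _ _ _ _ _ (hρB i) (hρE j) hRs0]

/-- Closed-form secrecy outage probability over ARS fading channels (integer `m`):
`P_o = Σᵢ Σⱼ Q_{B,i} Q_{E,j} W_{i,j}`. -/
theorem sop_closed_form (mB mE : ℕ) (hmB : 0 < mB) (hmE : 0 < mE)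
    (KB1 KB2 KE1 KE2 : ℝ) (hKB1 : 0 < KB1) (hKB2 : 0 < KB2)
    (hKE1 : 0 < KE1) (hKE2 : 0 < KE2)
    (ρB1 ρB2 ρE1 ρE2 : ℝ) (hρB1 : 0 < ρB1) (hρB2 : 0 < ρB2)
    (hρE1 : 0 < ρE1) (hρE2 : 0 < ρE2)
    (pB pE : ℝ) (hpB : pB ∈ Set.Icc (0 : ℝ) 1) (hpE : pE ∈ Set.Icc (0 : ℝ) 1)
    (Rs : ℝ) (hRs : 1 ≤ Rs) :
    ∫ γ in Set.Ioi (0 : ℝ),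
        arsCDF pB mB KB1 KB2 ρB1 ρB2 (Rs * γ + Rs - 1) *
          arsPDF pE mE KE1 KE2 ρE1 ρE2 γ =
      ∑ i : Fin 2, ∑ j : Fin 2,
        (![pB, 1 - pB] i) * (![pE, 1 - pE] j) *
          (∑ l ∈ Finset.range mB, ∑ n ∈ Finset.range mE,
            Bcoef mB (![KB1, KB2] i) l * Bcoef mE (![KE1, KE2] j) n *
              (1 - Real.exp (-(Rs - 1) / ![ρB1, ρB2] i) *
                ∑ k ∈ Finset.range (mB - l), ∑ t ∈ Finset.range (k + 1),
                  (Rs - 1) ^ t * Rs ^ (k - t) *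
                      ((mE - n + k - t - 1).factorial : ℝ) /
                      ((![ρB1, ρB2] i) ^ k * (![ρE1, ρE2] j) ^ (mE - n) *
                        (t.factorial : ℝ) * ((k - t).factorial : ℝ) *
                        ((mE - n - 1).factorial : ℝ)) *
                    (1 / ![ρE1, ρE2] j + Rs / ![ρB1, ρB2] i) ^
                      (-((mE - n + k - t : ℕ) : ℤ)))) :=
  sop_closed_form_general mB mE KB1 KB2 KE1 KE2 ρB1 ρB2 ρE1 ρE2 hρB1 hρB2 hρE1 hρE2 pB pE Rs hRs
end

section
/- Let m_B, m_E be positive integers, K_{B,1}, K_{B,2}, K_{E,1}, K_{E,2} > 0, ρ_{E,1}, ρ_{E,2} > 0, c₁, c₂ > 0 real, and p_B, p_E ∈ [0,1]. For s > 0, let f_B^{(s)} and F_B^{(s)} be the ARS PDF and CDF with parameters (p_B, m_B, K_{B,1}, K_{B,2}, c₁·s, c₂·s), and let f_E^{ARS}, F_E^{ARS} be the ARS PDF and CDF with parameters (p_E, m_E, K_{E,1}, K_{E,2}, ρ_{E,1}, ρ_{E,2}). Define the average secrecy capacity C̄_s(s) = I₁(s) + I₂(s) − I₃, where I₁(s)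 = ∫₀^∞ ln(1+γ)·f_B^{(s)}(γ)·F_E^{ARS}(γ) dγ, I₂(s) = ∫₀^∞ ln(1+γ)·f_E^{ARS}(γ)·F_B^{(s)}(γ) dγ, and I₃ = ∫₀^∞ ln(1+γ)·f_E^{ARS}(γ) dγ. Then the high-SNR slope satisfies lim_{s→∞} C̄_s(s) / log₂(s) = ln 2. -/
open MeasureTheory Filter Finset Real

/-!
Substituting `γ = s u` turns the main-channel density at average SNR `s` into a fixed mixture
`ψ` of Erlang densities, so `I₁ s = ∫ log (1 + s u) ψ(u) F_E(s u) du`. The ratio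
`log (1 + s u) / log s` tends to `1` and is dominated by `log (1 + u) + 2`, while `F_E(s u) → 1`,
so dominated convergence gives `I₁ s ~ log s`. Since CDFs take values in `[0, 1]`, `I₂ s - I₃`
stays bounded, and `logb 2 s = log s / log 2`.
-/

open scoped Nat Topology

lemma Bcoef_nonneg (m : ℕ) {K : ℝ} (hK : 0 ≤ K) (n : ℕ) : 0 ≤ Bcoef m K n := by
  unfold Bcoef
  positivity

lemma sum_Bcoef {m : ℕ} (hm : 0 < m) {K : ℝ} (hK : 0 ≤ K) :
    ∑ n ∈ range m, Bcoef m K n = 1 := by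
  have hKm : K + m ≠ 0 := by positivity
  calc ∑ n ∈ range m, Bcoef m K n
      = ∑ n ∈ range (m - 1 + 1),
          (m / (K + m)) ^ n * (K / (K + m)) ^ (m - 1 - n) * ((m - 1).choose n : ℝ) := by
        rw [Nat.sub_add_cancel hm]
        exact sum_congr rfl fun n _ => by unfold Bcoef; ring
    _ = (m / (K + m) + K / (K + m)) ^ (m - 1) := (add_pow _ _ _).symm
    _ = 1 := by rw [← add_div, add_comm, div_self hKm, one_pow]

lemma integrableOn_pow_mul_exp_neg_div (k : ℕ) {ρ : ℝ} (hρ : 0 < ρ) :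
    IntegrableOn (fun γ : ℝ => γ ^ k * exp (-γ / ρ)) (Set.Ioi 0) := by
  refine (integrableOn_rpow_mul_exp_neg_mul_rpow (s := k) (p := 1)
    (neg_one_lt_zero.trans_le k.cast_nonneg) one_pos
    (inv_pos.2 hρ)).congr_fun (fun γ _ => ?_) measurableSet_Ioi
  simp only [Real.rpow_natCast, Real.rpow_one]
  ring_nf

lemma integral_pow_mul_exp_neg_div (k : ℕ) {ρ : ℝ} (hρ : 0 < ρ) :
    ∫ γ in Set.Ioi (0 : ℝ), γ ^ k * exp (-γ / ρ) = ρ ^ (k + 1) * k ! := by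
  have h := integral_rpow_mul_exp_neg_mul_Ioi (a := k + 1) (by positivity) (inv_pos.2 hρ)
  rw [one_div, inv_inv, Real.Gamma_nat_eq_factorial, ← Nat.cast_succ, Real.rpow_natCast] at h
  rw [← h]
  refine setIntegral_congr_fun measurableSet_Ioi fun γ _ => ?_
  simp only [Nat.cast_succ, add_sub_cancel_right, Real.rpow_natCast]
  ring_nf

lemma rsPDF_eq_sum (m : ℕ) (K ρ γ : ℝ) :
    rsPDF m K ρ γ = ∑ n ∈ range m,
      Bcoef m K n / (ρ ^ (m - n) * (m - n - 1)!) * (γ ^ (m - n - 1) * exp (-γ / ρ)) :=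
  sum_congr rfl fun _ _ => by ring

lemma integrableOn_pow_mul_rsPDF (j m : ℕ) (K : ℝ) {ρ : ℝ} (hρ : 0 < ρ) :
    IntegrableOn (fun γ => γ ^ j * rsPDF m K ρ γ) (Set.Ioi 0) := by
  simp_rw [rsPDF_eq_sum, mul_sum]
  refine integrable_finsetSum _ fun n _ => ?_
  refine IntegrableOn.congr_fun
    ((integrableOn_pow_mul_exp_neg_div (j + (m - n - 1)) hρ).const_mul
      (Bcoef m K n / (ρ ^ (m - n) * (m - n - 1)!))) (fun γ _ => ?_) measurableSet_Ioi
  ring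

lemma integral_rsPDF {m : ℕ} (hm : 0 < m) {K ρ : ℝ} (hK : 0 ≤ K) (hρ : 0 < ρ) :
    ∫ γ in Set.Ioi 0, rsPDF m K ρ γ = 1 := by
  simp_rw [rsPDF_eq_sum]
  rw [integral_finsetSum _ fun n _ => (integrableOn_pow_mul_exp_neg_div _ hρ).const_mul _]
  rw [← sum_Bcoef hm hK]
  refine sum_congr rfl fun n hn => ?_
  have hmn : m - n - 1 + 1 = m - n := by have := mem_range.1 hn; omega
  rw [integral_const_mul, integral_pow_mul_exp_neg_div _ hρ, hmn]
  field_simp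

lemma rsPDF_mul_right (m : ℕ) (K ρ a γ : ℝ) :
    rsPDF m K (ρ * a) γ = rsPDF m K ρ (γ / a) / a := by
  simp only [rsPDF_eq_sum, sum_div]
  refine sum_congr rfl fun n hn => ?_
  have hmn : m - n = m - n - 1 + 1 := by have := mem_range.1 hn; omega
  rw [hmn, Nat.add_sub_cancel, neg_div, neg_div, div_div γ a ρ, mul_comm a ρ, mul_pow, div_pow]
  ring

lemma integrableOn_pow_mul_arsPDF (j : ℕ) (p : ℝ) (m : ℕ) (K₁ K₂ : ℝ) {ρ₁ ρ₂ : ℝ}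
    (hρ₁ : 0 < ρ₁) (hρ₂ : 0 < ρ₂) :
    IntegrableOn (fun γ => γ ^ j * arsPDF p m K₁ K₂ ρ₁ ρ₂ γ) (Set.Ioi 0) := by
  simp_rw [arsPDF, mul_add, mul_left_comm _ p, mul_left_comm _ (1 - p)]
  exact ((integrableOn_pow_mul_rsPDF j m K₁ hρ₁).const_mul p).add
    ((integrableOn_pow_mul_rsPDF j m K₂ hρ₂).const_mul (1 - p))

lemma integral_arsPDF (p : ℝ) {m : ℕ} (hm : 0 < m) {K₁ K₂ ρ₁ ρ₂ : ℝ} (hK₁ : 0 ≤ K₁)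
    (hK₂ : 0 ≤ K₂) (hρ₁ : 0 < ρ₁) (hρ₂ : 0 < ρ₂) :
    ∫ γ in Set.Ioi 0, arsPDF p m K₁ K₂ ρ₁ ρ₂ γ = 1 := by
  have h₁ := (integrableOn_pow_mul_rsPDF 0 m K₁ hρ₁).const_mul p
  have h₂ := (integrableOn_pow_mul_rsPDF 0 m K₂ hρ₂).const_mul (1 - p)
  simp only [pow_zero, one_mul] at h₁ h₂
  unfold arsPDF
  rw [integral_add h₁ h₂, integral_const_mul, integral_const_mul, integral_rsPDF hm hK₁ hρ₁,
    integral_rsPDF hm hK₂ hρ₂]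
  ring

lemma arsPDF_mul_right (p : ℝ) (m : ℕ) (K₁ K₂ ρ₁ ρ₂ a γ : ℝ) :
    arsPDF p m K₁ K₂ (ρ₁ * a) (ρ₂ * a) γ = arsPDF p m K₁ K₂ ρ₁ ρ₂ (γ / a) / a := by
  simp only [arsPDF, rsPDF_mul_right]
  ring

lemma IntegrableOn.log_one_add_mul {f : ℝ → ℝ} (hf : IntegrableOn f (Set.Ioi 0))
    (hf₁ : IntegrableOn (fun u => u * f u) (Set.Ioi 0)) :
    IntegrableOn (fun u => log (1 + u) * f u) (Set.Ioi 0) := by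
  have hlog : Measurable fun u : ℝ => log (1 + u) := by fun_prop
  refine hf₁.norm.mono' (hlog.aestronglyMeasurable.mul hf.aestronglyMeasurable)
    ((ae_restrict_iff' measurableSet_Ioi).2 (.of_forall fun u (hu : 0 < u) => ?_))
  have hlog_u : 0 ≤ log (1 + u) := log_nonneg (by linarith)
  rw [norm_mul, norm_mul, Real.norm_of_nonneg hlog_u, Real.norm_of_nonneg hu.le]
  gcongr
  linarith [log_le_sub_one_of_pos (by linarith : 0 < 1 + u)]

lemma integrableOn_log_one_add_mul_arsPDF (p : ℝ) (m : ℕ) (K₁ K₂ : ℝ) {ρ₁ ρ₂ : ℝ}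
    (hρ₁ : 0 < ρ₁) (hρ₂ : 0 < ρ₂) :
    IntegrableOn (fun γ => log (1 + γ) * arsPDF p m K₁ K₂ ρ₁ ρ₂ γ) (Set.Ioi 0) :=
  IntegrableOn.log_one_add_mul (by simpa using integrableOn_pow_mul_arsPDF 0 p m K₁ K₂ hρ₁ hρ₂)
    (by simpa using integrableOn_pow_mul_arsPDF 1 p m K₁ K₂ hρ₁ hρ₂)

/-- `erlangTail N x = ℙ(Poisson(x) < N)`, the survival function of the Erlang law with shape
`N` and unit rate. -/
noncomputable def erlangTail (N : ℕ) (x : ℝ) : ℝ :=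
  exp (-x) * ∑ k ∈ range N, x ^ k / k !

lemma erlangTail_nonneg (N : ℕ) {x : ℝ} (hx : 0 ≤ x) : 0 ≤ erlangTail N x := by
  unfold erlangTail
  positivity

lemma erlangTail_le_one (N : ℕ) {x : ℝ} (hx : 0 ≤ x) : erlangTail N x ≤ 1 := by
  calc erlangTail N x ≤ exp (-x) * exp x := by
        unfold erlangTail
        gcongr
        exact sum_le_exp_of_nonneg hx N
    _ = 1 := by rw [← exp_add, neg_add_cancel, exp_zero]

lemma tendsto_erlangTail_atTop (N : ℕ) : Tendsto (erlangTail N) atTop (𝓝 0) := by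
  have h : Tendsto (fun x => ∑ k ∈ range N, x ^ k * exp (-x) / k !) atTop
      (𝓝 (∑ _k ∈ range N, 0)) :=
    tendsto_finsetSum _ fun k _ => by
      simpa using (tendsto_pow_mul_exp_neg_atTop_nhds_zero k).div_const (k ! : ℝ)
  rw [sum_const_zero] at h
  refine h.congr fun x => ?_
  rw [erlangTail, mul_sum]
  exact sum_congr rfl fun k _ => by ring

lemma rsCDF_eq {m : ℕ} (hm : 0 < m) {K : ℝ} (hK : 0 ≤ K) (ρ γ : ℝ) :
    rsCDF m K ρ γ = 1 - ∑ j ∈ range m, Bcoef m K j * erlangTail (m - j) (γ / ρ) := by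
  rw [← sum_Bcoef hm hK, ← sum_sub_distrib]
  refine sum_congr rfl fun j _ => ?_
  simp only [erlangTail, div_pow, div_div, neg_div]
  ring

lemma rsCDF_mem_Icc {m : ℕ} (hm : 0 < m) {K ρ γ : ℝ} (hK : 0 ≤ K) (hρ : 0 ≤ ρ) (hγ : 0 ≤ γ) :
    rsCDF m K ρ γ ∈ Set.Icc 0 1 := by
  have hx : 0 ≤ γ / ρ := div_nonneg hγ hρ
  have hle : ∑ j ∈ range m, Bcoef m K j * erlangTail (m - j) (γ / ρ) ≤ 1 :=
    calc _ ≤ ∑ j ∈ range m, Bcoef m K j :=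
          sum_le_sum fun j _ => mul_le_of_le_one_right (Bcoef_nonneg m hK j)
            (erlangTail_le_one _ hx)
      _ = 1 := sum_Bcoef hm hK
  have hnonneg : 0 ≤ ∑ j ∈ range m, Bcoef m K j * erlangTail (m - j) (γ / ρ) :=
    sum_nonneg fun j _ => mul_nonneg (Bcoef_nonneg m hK j) (erlangTail_nonneg _ hx)
  rw [rsCDF_eq hm hK]
  constructor <;> linarith

lemma tendsto_rsCDF_atTop {m : ℕ} (hm : 0 < m) {K ρ : ℝ} (hK : 0 ≤ K) (hρ : 0 < ρ) :
    Tendsto (rsCDF m K ρ) atTop (𝓝 1) := by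
  have h : Tendsto (fun γ => 1 - ∑ j ∈ range m, Bcoef m K j * erlangTail (m - j) (γ / ρ))
      atTop (𝓝 (1 - ∑ j ∈ range m, Bcoef m K j * 0)) :=
    tendsto_const_nhds.sub <| tendsto_finsetSum _ fun j _ =>
      ((tendsto_erlangTail_atTop _).comp (tendsto_id.atTop_div_const hρ)).const_mul _
  simp only [mul_zero, sum_const_zero, sub_zero] at h
  exact h.congr fun γ => (rsCDF_eq hm hK ρ γ).symm

lemma abs_arsCDF_le_one {p : ℝ} (hp : p ∈ Set.Icc 0 1) {m : ℕ} (hm : 0 < m) {K₁ K₂ ρ₁ ρ₂ γ : ℝ}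
    (hK₁ : 0 ≤ K₁) (hK₂ : 0 ≤ K₂) (hρ₁ : 0 ≤ ρ₁) (hρ₂ : 0 ≤ ρ₂) (hγ : 0 ≤ γ) :
    |arsCDF p m K₁ K₂ ρ₁ ρ₂ γ| ≤ 1 := by
  obtain ⟨h₀, h₁⟩ := convex_Icc (0 : ℝ) 1 (rsCDF_mem_Icc hm hK₁ hρ₁ hγ)
    (rsCDF_mem_Icc hm hK₂ hρ₂ hγ) hp.1 (sub_nonneg.2 hp.2) (add_sub_cancel p 1)
  rw [smul_eq_mul, smul_eq_mul] at h₀ h₁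
  rw [arsCDF, abs_le]
  exact ⟨by linarith, h₁⟩

lemma tendsto_arsCDF_atTop (p : ℝ) {m : ℕ} (hm : 0 < m) {K₁ K₂ ρ₁ ρ₂ : ℝ} (hK₁ : 0 ≤ K₁)
    (hK₂ : 0 ≤ K₂) (hρ₁ : 0 < ρ₁) (hρ₂ : 0 < ρ₂) :
    Tendsto (arsCDF p m K₁ K₂ ρ₁ ρ₂) atTop (𝓝 1) := by
  have h := ((tendsto_rsCDF_atTop hm hK₁ hρ₁).const_mul p).add
    ((tendsto_rsCDF_atTop hm hK₂ hρ₂).const_mul (1 - p))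
  rwa [mul_one, mul_one, add_sub_cancel] at h

lemma continuous_arsCDF (p : ℝ) (m : ℕ) (K₁ K₂ ρ₁ ρ₂ : ℝ) :
    Continuous (arsCDF p m K₁ K₂ ρ₁ ρ₂) := by
  unfold arsCDF rsCDF
  fun_prop

lemma log_one_add_mul_le {a b : ℝ} (ha : 0 ≤ a) (hb : 0 ≤ b) :
    log (1 + a * b) ≤ log (1 + a) + log (1 + b) := by
  rw [← log_mul (by positivity) (by positivity)]
  exact log_le_log (by positivity) (by nlinarith)

lemma log_one_add_mul_div_log_le {s u : ℝ} (hs : exp 1 ≤ s) (hu : 0 ≤ u) :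
    log (1 + s * u) / log s ≤ log (1 + u) + 2 := by
  have hs₀ : 0 < s := (exp_pos 1).trans_le hs
  have hlog_s : 1 ≤ log s := by rwa [le_log_iff_exp_le hs₀]
  have hlog_u : 0 ≤ log (1 + u) := log_nonneg (by linarith)
  have h₁ : log (1 + s) ≤ log 2 + log s := by
    rw [← log_mul two_ne_zero hs₀.ne']
    exact log_le_log (by positivity) (by linarith [add_one_le_exp 1])
  have h₂ := log_one_add_mul_le hs₀.le hu
  have h₃ : log 2 < 1 := log_two_lt_d9.trans (by norm_num)
  rw [div_le_iff₀ (by linarith)]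
  nlinarith

lemma tendsto_log_one_add_mul_div_log {u : ℝ} (hu : 0 < u) :
    Tendsto (fun s => log (1 + s * u) / log s) atTop (𝓝 1) := by
  have hsu : Tendsto (fun s => s * u) atTop atTop := tendsto_id.atTop_mul_const hu
  have hdiff : Tendsto (fun s => log (1 + s * u) - log s) atTop (𝓝 (0 + log u)) := by
    refine ((tendsto_log_comp_add_sub_log 1).comp hsu).add_const (log u) |>.congr' ?_
    filter_upwards [eventually_gt_atTop 0] with s hs
    simp only [Function.comp_apply, log_mul hs.ne' hu.ne', add_comm (s * u)]
    ring
  have h := (hdiff.div_atTop tendsto_log_atTop).const_add 1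
  rw [add_zero] at h
  refine h.congr' ?_
  filter_upwards [eventually_gt_atTop 1] with s hs
  field_simp [(log_pos hs).ne']
  ring

section LogScaling

variable {f G : ℝ → ℝ} {C L : ℝ}

lemma tendsto_setIntegral_log_one_add_mul_div_log (hf : IntegrableOn f (Set.Ioi 0))
    (hlogf : IntegrableOn (fun u => log (1 + u) * f u) (Set.Ioi 0)) (hG : Measurable G)
    (hGC : ∀ x, 0 < x → |G x| ≤ C) (hGL : Tendsto G atTop (𝓝 L)) :
    Tendsto (fun s => ∫ u in Set.Ioi 0, log (1 + s * u) / log s * f u * G (s * u)) atTop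
      (𝓝 ((∫ u in Set.Ioi 0, f u) * L)) := by
  rw [← integral_mul_const]
  refine tendsto_integral_filter_of_dominated_convergence
    (fun u => (‖log (1 + u) * f u‖ + 2 * ‖f u‖) * C) ?_ ?_ ?_ ?_
  · refine .of_forall fun s => ?_
    have hlog : Measurable fun u : ℝ => log (1 + s * u) / log s := by fun_prop
    exact (hlog.aestronglyMeasurable.mul hf.aestronglyMeasurable).mul
      (hG.comp (measurable_const_mul s)).aestronglyMeasurable
  · filter_upwards [eventually_ge_atTop (exp 1)] with s hs
    refine (ae_restrict_iff' measurableSet_Ioi).2 (.of_forall fun u (hu : 0 < u) => ?_)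
    have hs₀ : 0 < s := (exp_pos 1).trans_le hs
    have hratio : 0 ≤ log (1 + s * u) / log s :=
      div_nonneg (log_nonneg (by nlinarith)) (log_nonneg (by linarith [add_one_le_exp 1]))
    have hlog_u : 0 ≤ log (1 + u) := log_nonneg (by linarith)
    rw [norm_mul, norm_mul, norm_mul, Real.norm_of_nonneg hratio, Real.norm_of_nonneg hlog_u,
      Real.norm_eq_abs (G _), ← add_mul]
    exact mul_le_mul (mul_le_mul_of_nonneg_right (log_one_add_mul_div_log_le hs hu.le)
      (norm_nonneg _)) (hGC _ (by positivity)) (abs_nonneg _) (by positivity)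
  · exact (hlogf.norm.add (hf.norm.const_mul 2)).mul_const C
  · refine (ae_restrict_iff' measurableSet_Ioi).2 (.of_forall fun u hu => ?_)
    simpa using ((tendsto_log_one_add_mul_div_log hu).mul_const (f u)).mul
      (hGL.comp (tendsto_id.atTop_mul_const hu))

lemma tendsto_setIntegral_log_one_add_mul_rescale_div_log (hf : IntegrableOn f (Set.Ioi 0))
    (hlogf : IntegrableOn (fun u => log (1 + u) * f u) (Set.Ioi 0)) (hG : Measurable G)
    (hGC : ∀ x, 0 < x → |G x| ≤ C) (hGL : Tendsto G atTop (𝓝 L)) :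
    Tendsto (fun s => (∫ γ in Set.Ioi 0, log (1 + γ) * (f (γ / s) / s) * G γ) / log s) atTop
      (𝓝 ((∫ u in Set.Ioi 0, f u) * L)) := by
  refine (tendsto_setIntegral_log_one_add_mul_div_log hf hlogf hG hGC hGL).congr' ?_
  filter_upwards [eventually_gt_atTop 0] with s hs
  have h := integral_comp_mul_left_Ioi' (fun γ => log (1 + γ) * (f (γ / s) / s) * G γ) 0 hs
  rw [mul_zero] at h
  rw [← h, smul_eq_mul, ← integral_const_mul, ← integral_div]
  refine setIntegral_congr_fun measurableSet_Ioi fun u _ => ?_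
  rw [mul_div_cancel_left₀ u hs.ne']
  field_simp

end LogScaling

lemma tendsto_div_log_atTop_of_abs_le {f : ℝ → ℝ} {M : ℝ} (hf : ∀ᶠ s in atTop, |f s| ≤ M) :
    Tendsto (fun s => f s / log s) atTop (𝓝 0) := by
  refine squeeze_zero_norm' ?_ (tendsto_const_nhds (x := M) |>.div_atTop tendsto_log_atTop)
  filter_upwards [hf, eventually_gt_atTop 1] with s hfs hs
  rw [norm_div, Real.norm_eq_abs, Real.norm_of_nonneg (log_pos hs).le]
  exact div_le_div_of_nonneg_right hfs (log_pos hs).le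

/-- The high-SNR slope of the average secrecy capacity equals `ln 2`. -/
theorem asc_high_snr_slope (mB mE : ℕ) (hmB : 0 < mB) (hmE : 0 < mE)
    (KB1 KB2 KE1 KE2 : ℝ) (hKB1 : 0 < KB1) (hKB2 : 0 < KB2)
    (hKE1 : 0 < KE1) (hKE2 : 0 < KE2)
    (ρE1 ρE2 c1 c2 : ℝ) (hρE1 : 0 < ρE1) (hρE2 : 0 < ρE2)
    (hc1 : 0 < c1) (hc2 : 0 < c2)
    (pB pE : ℝ) (hpB : pB ∈ Set.Icc (0 : ℝ) 1) (hpE : pE ∈ Set.Icc (0 : ℝ) 1) :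
    let I₁ : ℝ → ℝ := fun s =>
      ∫ γ in Set.Ioi (0 : ℝ),
        Real.log (1 + γ) * arsPDF pB mB KB1 KB2 (c1 * s) (c2 * s) γ *
          arsCDF pE mE KE1 KE2 ρE1 ρE2 γ
    let I₂ : ℝ → ℝ := fun s =>
      ∫ γ in Set.Ioi (0 : ℝ),
        Real.log (1 + γ) * arsPDF pE mE KE1 KE2 ρE1 ρE2 γ *
          arsCDF pB mB KB1 KB2 (c1 * s) (c2 * s) γ
    let I₃ : ℝ :=
      ∫ γ in Set.Ioi (0 : ℝ), Real.log (1 + γ) * arsPDF pE mE KE1 KE2 ρE1 ρE2 γ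
    Filter.Tendsto
      (fun s : ℝ => (I₁ s + I₂ s - I₃) / Real.logb 2 s)
      Filter.atTop (nhds (Real.log 2)) := by
  intro I₁ I₂ I₃
  have hI₁ : Tendsto (fun s => I₁ s / log s) atTop (𝓝 1) := by
    have h := tendsto_setIntegral_log_one_add_mul_rescale_div_log
      (by simpa using integrableOn_pow_mul_arsPDF 0 pB mB KB1 KB2 hc1 hc2)
      (integrableOn_log_one_add_mul_arsPDF pB mB KB1 KB2 hc1 hc2)
      (continuous_arsCDF pE mE KE1 KE2 ρE1 ρE2).measurable
      (fun γ hγ => abs_arsCDF_le_one hpE hmE hKE1.le hKE2.le hρE1.le hρE2.le hγ.le)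
      (tendsto_arsCDF_atTop pE hmE hKE1.le hKE2.le hρE1 hρE2)
    rw [integral_arsPDF pB hmB hKB1.le hKB2.le hc1 hc2, one_mul] at h
    exact h.congr fun s => by simp only [I₁, arsPDF_mul_right]
  have hI₂₃ : Tendsto (fun s => (I₂ s - I₃) / log s) atTop (𝓝 0) := by
    have hlogE := integrableOn_log_one_add_mul_arsPDF pE mE KE1 KE2 hρE1 hρE2
    refine tendsto_div_log_atTop_of_abs_le (M := (∫ γ in Set.Ioi 0,
      ‖log (1 + γ) * arsPDF pE mE KE1 KE2 ρE1 ρE2 γ‖) + |I₃|) ?_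
    filter_upwards [eventually_gt_atTop 0] with s hs
    have hI₂ : |I₂ s| ≤ ∫ γ in Set.Ioi 0, ‖log (1 + γ) * arsPDF pE mE KE1 KE2 ρE1 ρE2 γ‖ := by
      rw [← Real.norm_eq_abs]
      refine norm_integral_le_of_norm_le hlogE.norm
        ((ae_restrict_iff' measurableSet_Ioi).2 (.of_forall fun γ (hγ : 0 < γ) => ?_))
      rw [norm_mul _ (arsCDF _ _ _ _ _ _ γ)]
      exact mul_le_of_le_one_right (norm_nonneg _) (abs_arsCDF_le_one hpB hmB hKB1.le hKB2.le
        (by positivity) (by positivity) hγ.le)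
    linarith [abs_sub (I₂ s) I₃]
  have h := (hI₁.add hI₂₃).const_mul (log 2)
  rw [add_zero, mul_one] at h
  exact h.congr fun s => by rw [logb, div_div_eq_mul_div]; ring
end
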